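/- arXiv:1207.0252 — 4 statements merged into one kernel-verified Lean document; each statement's English description precedes it below -/
import Mathlib

section
/- Let k ≥ 1 be an integer and p ∈ (0,1] a real number. For any n ∈ ℕ and any input assignment x : Fin n → Bool, let s = |{v : x v = true}| and consider the product Π = ∏_{v : Fin n} (if x v then p^(1/k) else 1). Then: (i) if s ≤ k, then Π ≥ p; and (ii) if s ≥ k+1, then Π ≤ p^(1+1/k) (equivalently, 1 − Π ≥ 1 − p^(1+1/k)). -/
open Finset

theorem Fintype.prod_ite_one_eq_pow_card {ι M : Type*} [Fintype ι] [CommMonoid M]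
    (P : ι → Prop) [DecidablePred P] (a : M) :
    ∏ v, (if P v then a else 1) = a ^ #{v | P v} := by
  rw [← prod_filter, prod_const]

theorem Real.rpow_one_div_pow {p : ℝ} (hp : 0 ≤ p) (k : ℝ) (s : ℕ) :
    (p ^ (1 / k)) ^ s = p ^ (s / k) := by
  rw [← rpow_natCast, ← rpow_mul hp, one_div_mul_eq_div]

theorem amos_k_zero_round_decider
    (k : ℕ) (hk : 1 ≤ k) (p : ℝ) (hp : 0 < p) (hp1 : p ≤ 1)
    (n : ℕ) (x : Fin n → Bool) :
    ((Finset.univ.filter (fun v : Fin n => x v = true)).card ≤ k →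
      p ≤ ∏ v : Fin n, (if x v then p ^ ((1 : ℝ) / (k : ℝ)) else 1)) ∧
    (k + 1 ≤ (Finset.univ.filter (fun v : Fin n => x v = true)).card →
      ∏ v : Fin n, (if x v then p ^ ((1 : ℝ) / (k : ℝ)) else 1)
        ≤ p ^ (1 + (1 : ℝ) / (k : ℝ))) := by
  have hk0 : (0 : ℝ) < k := by exact_mod_cast hk
  rw [Fintype.prod_ite_one_eq_pow_card, Real.rpow_one_div_pow hp.le]
  refine ⟨fun hs => ?_, fun hs => ?_⟩
  · calc p = p ^ (1 : ℝ) := (Real.rpow_one p).symm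
      _ ≤ _ := Real.rpow_le_rpow_of_exponent_ge hp hp1 <|
        (div_le_one hk0).2 (by exact_mod_cast hs)
  · refine Real.rpow_le_rpow_of_exponent_ge hp hp1 ?_
    rw [le_div_iff₀ hk0, add_mul, one_div_mul_cancel hk0.ne', one_mul]
    exact_mod_cast hs
end

section
/- Let k ≥ 1 be an integer, let p ∈ (0,1) and ε > 0 be reals, and let δ be a real with 0 < δ < p^(1+1/k)·(1 − p^ε)/k. Let p_1, …, p_{k+1} ∈ (0,1] and let j be an index with p_j = max_i p_i. Let Y and Y' be reals with p ≤ Y ≤ ∏_{i ≠ j} p_i, Y' ≥ 0, and Y' ≥ (∏_{i=1}^{k+1} p_i) − k·δ. Then Y' > p^(1/k + ε) · Y. -/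
/-!
Write `P` for the product of the `p_i` other than the largest one `p_j`. Since `P ≤ p_j ^ k`,
the full product `p_j * P` is at least `P ^ (1 + 1/k) ≥ Y ^ (1 + 1/k)`. As `Y ≥ p` and
`p ^ ε ≤ 1`, the convex combination `p ^ ε * Y + (1 - p ^ ε) * p` is at most `Y`, so
`Y ^ (1 + 1/k) ≥ p ^ (1/k + ε) * Y + p ^ (1 + 1/k) * (1 - p ^ ε)`,
and the bound on `δ` makes the last term larger than `k * δ`.
-/

open Finset

theorem Real.rpow_one_add_inv_natCast_prod_erase_le_prod {ι : Type*} [Fintype ι]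
    [DecidableEq ι] {k : ℕ} (hk : k ≠ 0) (hcard : Fintype.card ι = k + 1) {f : ι → ℝ}
    (hf : ∀ i, 0 ≤ f i) {j : ι} (hj : ∀ i, f i ≤ f j) :
    (∏ i ∈ univ.erase j, f i) ^ (1 + (k : ℝ)⁻¹) ≤ ∏ i, f i := by
  set P := ∏ i ∈ univ.erase j, f i
  have hP : 0 ≤ P := prod_nonneg fun i _ => hf i
  have hP_le : P ≤ f j ^ k := by
    calc P ≤ ∏ _i ∈ univ.erase j, f j := prod_le_prod (fun i _ => hf i) fun i _ => hj i
      _ = f j ^ k := by simp [card_erase_of_mem, hcard]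
  have hroot : P ^ (k : ℝ)⁻¹ ≤ f j := by
    calc P ^ (k : ℝ)⁻¹ ≤ (f j ^ k) ^ (k : ℝ)⁻¹ := by gcongr
      _ = f j := Real.pow_rpow_inv_natCast (hf j) hk
  calc P ^ (1 + (k : ℝ)⁻¹) = P * P ^ (k : ℝ)⁻¹ := by
        rw [Real.rpow_add' hP (by positivity), Real.rpow_one]
    _ ≤ P * f j := by gcongr
    _ = ∏ i, f i := by rw [mul_comm, mul_prod_erase univ f (mem_univ j)]

theorem Real.mul_rpow_mul_add_rpow_one_add_mul_one_sub_le {p Y r c : ℝ} (hp : 0 < p) (hpY : p ≤ Y)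
    (hr : 0 ≤ r) (hc1 : c ≤ 1) :
    c * p ^ r * Y + p ^ (1 + r) * (1 - c) ≤ Y ^ (1 + r) := by
  have hY : 0 < Y := hp.trans_le hpY
  have hconv : c * Y + (1 - c) * p ≤ Y := by nlinarith
  calc c * p ^ r * Y + p ^ (1 + r) * (1 - c) = p ^ r * (c * Y + (1 - c) * p) := by
        rw [Real.rpow_add hp, Real.rpow_one]; ring
    _ ≤ p ^ r * Y := by gcongr
    _ ≤ Y ^ r * Y := by gcongr
    _ = Y ^ (1 + r) := by rw [Real.rpow_add hY, Real.rpow_one, mul_comm]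

theorem amos_k_lower_bound_skeleton_general
    (k : ℕ) (hk : 1 ≤ k) (p ε : ℝ) (hp : 0 < p) (hp1 : p < 1) (hε : 0 < ε)
    (δ : ℝ)
    (hδ : δ < p ^ (1 + (1 : ℝ) / (k : ℝ)) * (1 - p ^ ε) / (k : ℝ))
    (f : Fin (k + 1) → ℝ) (hf0 : ∀ i, 0 < f i)
    (j : Fin (k + 1)) (hj : ∀ i, f i ≤ f j)
    (Y Y' : ℝ) (hYlo : p ≤ Y) (hYhi : Y ≤ ∏ i ∈ Finset.univ.erase j, f i)
    (hY' : (∏ i : Fin (k + 1), f i) - (k : ℝ) * δ ≤ Y') :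
    Y' > p ^ ((1 : ℝ) / (k : ℝ) + ε) * Y := by
  have hk0 : (0 : ℝ) < k := by exact_mod_cast hk
  have hpε : p ^ ε ≤ 1 := Real.rpow_le_one hp.le hp1.le hε.le
  have hprod : Y ^ (1 + (1 : ℝ) / k) ≤ ∏ i, f i := by
    calc Y ^ (1 + (1 : ℝ) / k) ≤ (∏ i ∈ univ.erase j, f i) ^ (1 + (1 : ℝ) / k) := by
          gcongr
          linarith
      _ ≤ ∏ i, f i := by
          rw [one_div]
          exact Real.rpow_one_add_inv_natCast_prod_erase_le_prod (by omega) (by simp)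
            (fun i => (hf0 i).le) hj
  have hkδ : k * δ < p ^ (1 + (1 : ℝ) / k) * (1 - p ^ ε) := by
    rwa [lt_div_iff₀ hk0, mul_comm] at hδ
  have hslack := Real.mul_rpow_mul_add_rpow_one_add_mul_one_sub_le (r := 1 / k) hp hYlo
    (by positivity) hpε
  rw [Real.rpow_add hp, mul_comm (p ^ _) (p ^ ε)]
  linarith

theorem amos_k_lower_bound_skeleton
    (k : ℕ) (hk : 1 ≤ k) (p ε : ℝ) (hp : 0 < p) (hp1 : p < 1) (hε : 0 < ε)
    (δ : ℝ) (hδ0 : 0 < δ)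
    (hδ : δ < p ^ (1 + (1 : ℝ) / (k : ℝ)) * (1 - p ^ ε) / (k : ℝ))
    (f : Fin (k + 1) → ℝ) (hf0 : ∀ i, 0 < f i) (hf1 : ∀ i, f i ≤ 1)
    (j : Fin (k + 1)) (hj : ∀ i, f i ≤ f j)
    (Y Y' : ℝ) (hYlo : p ≤ Y) (hYhi : Y ≤ ∏ i ∈ Finset.univ.erase j, f i)
    (hY'0 : 0 ≤ Y') (hY' : (∏ i : Fin (k + 1), f i) - (k : ℝ) * δ ≤ Y') :
    Y' > p ^ ((1 : ℝ) / (k : ℝ) + ε) * Y :=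
  amos_k_lower_bound_skeleton_general k hk p ε hp hp1 hε δ hδ f hf0 j hj Y Y' hYlo hYhi hY'
end

section
/- Let a, b ≥ 1 be integers, let p ∈ (0,1) and ε > 0 be reals, and let δ be a real with 0 < δ < p^(1+b/a)·(1 − p^ε)/(a+b−1). Let p_1, …, p_{a+b} ∈ (0,1] and let J be a set of b indices with |J| = b and p_j ≥ p_i for every j ∈ J and i ∉ J. Let Y and Y' be reals with p ≤ Y ≤ ∏_{i ∉ J} p_i, Y' ≥ 0, and Y' ≥ (∏_{i=1}^{a+b} p_i) − (a+b−1)·δ. Then Y' > p^(b/a + ε) · Y. -/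
/-!
With `Q = ∏_{i ∉ J} p_i` over the `a` indices outside `J`, every `p_j` with `j ∈ J` dominates
all factors of `Q`, so `Q ≤ p_j ^ a`; hence `∏_{j ∈ J} p_j ≥ Q ^ (b/a)` and
`∏ p_i ≥ Q ^ (1 + b/a) ≥ Y · p ^ (b/a)`. The `δ`-loss is below `p ^ (1 + b/a) (1 - p^ε)`, which
is at most `Y · p ^ (b/a) (1 - p^ε)` because `p ≤ Y`.
-/

open Finset

theorem Finset.prod_pow_card_le_prod_pow_card {ι R : Type*} [CommSemiring R] [PartialOrder R]
    [IsOrderedRing R] {f : ι → R} {s t : Finset ι} (hf : ∀ i ∈ s, 0 ≤ f i)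
    (hst : ∀ i ∈ s, ∀ j ∈ t, f i ≤ f j) :
    (∏ i ∈ s, f i) ^ #t ≤ (∏ j ∈ t, f j) ^ #s := by
  rw [← prod_const, ← prod_pow]
  exact prod_le_prod (fun _ _ => prod_nonneg hf) fun j hj =>
    (prod_le_prod hf fun i hi => hst i hi j hj).trans_eq (prod_const _)

theorem Real.rpow_div_le_of_pow_le_pow {x y : ℝ} {m n : ℕ} (hx : 0 ≤ x) (hy : 0 ≤ y)
    (hn : n ≠ 0) (h : x ^ m ≤ y ^ n) : x ^ ((m : ℝ) / n) ≤ y := by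
  calc x ^ ((m : ℝ) / n) = (x ^ m) ^ (n⁻¹ : ℝ) := by
        rw [div_eq_mul_inv, Real.rpow_mul hx, Real.rpow_natCast]
    _ ≤ (y ^ n) ^ (n⁻¹ : ℝ) := by gcongr
    _ = y := Real.pow_rpow_inv_natCast hy hn

/-- For `c = 0` the hypothesis is vacuous (`y / 0 = 0`), which is why `0 < y` is assumed. -/
theorem mul_lt_of_lt_div_of_nonneg {α : Type*} [Field α] [LinearOrder α] [IsStrictOrderedRing α]
    {c x y : α} (hc : 0 ≤ c) (hy : 0 < y) (h : x < y / c) : c * x < y := by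
  rcases hc.eq_or_lt with rfl | hc
  · simpa using hy
  · rwa [mul_comm, ← lt_div_iff₀ hc]

theorem Real.rpow_add_mul_le_mul_rpow_sub {p s ε Y : ℝ} (hp : 0 < p) (hp1 : p ≤ 1) (hε : 0 ≤ ε)
    (hY : p ≤ Y) : p ^ (s + ε) * Y ≤ Y * p ^ s - p ^ (1 + s) * (1 - p ^ ε) := by
  have hpε : p ^ ε ≤ 1 := Real.rpow_le_one hp.le hp1 hε
  rw [Real.rpow_add hp, Real.rpow_add hp, Real.rpow_one]
  nlinarith [mul_nonneg (mul_nonneg (Real.rpow_pos_of_pos hp s).le (sub_nonneg.2 hpε))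
    (sub_nonneg.2 hY)]

theorem amos_a_promise_lower_bound_skeleton_general
    (a b : ℕ) (ha : 1 ≤ a) (p ε : ℝ) (hp : 0 < p) (hp1 : p < 1)
    (hε : 0 < ε) (δ : ℝ)
    (hδ : δ < p ^ (1 + (b : ℝ) / (a : ℝ)) * (1 - p ^ ε) / ((a : ℝ) + (b : ℝ) - 1))
    (f : Fin (a + b) → ℝ) (hf0 : ∀ i, 0 < f i)
    (J : Finset (Fin (a + b))) (hJcard : J.card = b)
    (hJmax : ∀ j ∈ J, ∀ i ∉ J, f i ≤ f j)
    (Y Y' : ℝ) (hYlo : p ≤ Y) (hYhi : Y ≤ ∏ i ∈ Jᶜ, f i)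
    (hY' : (∏ i : Fin (a + b), f i) - ((a : ℝ) + (b : ℝ) - 1) * δ ≤ Y') :
    Y' > p ^ ((b : ℝ) / (a : ℝ) + ε) * Y := by
  set Q := ∏ i ∈ Jᶜ, f i
  have hJc : #Jᶜ = a := by rw [card_compl, hJcard, Fintype.card_fin]; omega
  have hQJ : Q ^ ((b : ℝ) / a) ≤ ∏ j ∈ J, f j := by
    refine Real.rpow_div_le_of_pow_le_pow (prod_nonneg fun i _ => (hf0 i).le)
      (prod_nonneg fun i _ => (hf0 i).le) (by omega) ?_
    have := prod_pow_card_le_prod_pow_card (fun i _ => (hf0 i).le)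
      fun i hi j hj => hJmax j hj i (mem_compl.1 hi)
    rwa [hJc, hJcard] at this
  have hprod : Y * p ^ ((b : ℝ) / a) ≤ ∏ i, f i := by
    rw [← prod_compl_mul_prod J f]
    gcongr
    · exact prod_nonneg fun i _ => (hf0 i).le
    · exact hQJ.trans' (Real.rpow_le_rpow hp.le (hYlo.trans hYhi) (by positivity))
  have hloss : ((a : ℝ) + b - 1) * δ < p ^ (1 + (b : ℝ) / a) * (1 - p ^ ε) := by
    refine mul_lt_of_lt_div_of_nonneg ?_ ?_ hδ
    · have : (1 : ℝ) ≤ a := by exact_mod_cast ha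
      linarith [b.cast_nonneg (α := ℝ)]
    · exact mul_pos (Real.rpow_pos_of_pos hp _) (sub_pos.2 (Real.rpow_lt_one hp.le hp1 hε))
  linarith [Real.rpow_add_mul_le_mul_rpow_sub (s := (b : ℝ) / a) hp hp1.le hε.le hYlo]

theorem amos_a_promise_lower_bound_skeleton
    (a b : ℕ) (ha : 1 ≤ a) (hb : 1 ≤ b) (p ε : ℝ) (hp : 0 < p) (hp1 : p < 1)
    (hε : 0 < ε) (δ : ℝ) (hδ0 : 0 < δ)
    (hδ : δ < p ^ (1 + (b : ℝ) / (a : ℝ)) * (1 - p ^ ε) / ((a : ℝ) + (b : ℝ) - 1))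
    (f : Fin (a + b) → ℝ) (hf0 : ∀ i, 0 < f i) (hf1 : ∀ i, f i ≤ 1)
    (J : Finset (Fin (a + b))) (hJcard : J.card = b)
    (hJmax : ∀ j ∈ J, ∀ i ∉ J, f i ≤ f j)
    (Y Y' : ℝ) (hYlo : p ≤ Y) (hYhi : Y ≤ ∏ i ∈ Jᶜ, f i)
    (hY'0 : 0 ≤ Y')
    (hY' : (∏ i : Fin (a + b), f i) - ((a : ℝ) + (b : ℝ) - 1) * δ ≤ Y') :
    Y' > p ^ ((b : ℝ) / (a : ℝ) + ε) * Y :=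
  amos_a_promise_lower_bound_skeleton_general a b ha p ε hp hp1 hε δ hδ f hf0 J hJcard hJmax Y Y'
    hYlo hYhi hY'
end

section
/- Let a, b ≥ 1 be integers and p ∈ (0,1] a real number. For any n ∈ ℕ and any input assignment x : Fin n → Bool, let s = |{v : x v = true}| and consider the product Π = ∏_{v : Fin n} (if x v then p^(1/a) else 1). Then: (i) if s ≤ a, then Π ≥ p; and (ii) if s ≥ a + b, then Π ≤ p^(1 + b/a). -/
open Finset

/-!
Every selected node contributes the factor `p ^ (1 / a)`, so the acceptance probability is
`p ^ (s / a)`. As `p ≤ 1`, `t ↦ p ^ t` is antitone, and the two bounds are `s / a ≤ 1` and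
`1 + b / a ≤ s / a`.
-/

theorem Finset.prod_ite_one_eq_pow_card_filter {ι M : Type*} [CommMonoid M] (s : Finset ι)
    (P : ι → Prop) [DecidablePred P] (c : M) :
    ∏ i ∈ s, (if P i then c else 1) = c ^ #(s.filter P) := by
  rw [← prod_filter, prod_const]

theorem Real.rpow_one_div_natCast_pow {p : ℝ} (hp : 0 ≤ p) (a k : ℕ) :
    (p ^ (1 / (a : ℝ))) ^ k = p ^ ((k : ℝ) / a) := by
  rw [← rpow_natCast, ← rpow_mul hp, one_div_mul_eq_div]

theorem amos_a_promise_zero_round_decider_general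
    (a b : ℕ) (ha : 1 ≤ a) (p : ℝ) (hp : 0 < p) (hp1 : p ≤ 1)
    (n : ℕ) (x : Fin n → Bool) :
    ((Finset.univ.filter (fun v : Fin n => x v = true)).card ≤ a →
      p ≤ ∏ v : Fin n, (if x v then p ^ ((1 : ℝ) / (a : ℝ)) else 1)) ∧
    (a + b ≤ (Finset.univ.filter (fun v : Fin n => x v = true)).card →
      ∏ v : Fin n, (if x v then p ^ ((1 : ℝ) / (a : ℝ)) else 1)
        ≤ p ^ (1 + (b : ℝ) / (a : ℝ))) := by
  have ha0 : (0 : ℝ) < a := by exact_mod_cast ha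
  rw [prod_ite_one_eq_pow_card_filter, Real.rpow_one_div_natCast_pow hp.le]
  refine ⟨fun hs => ?_, fun hs => ?_⟩
  · refine Real.self_le_rpow_of_le_one hp.le hp1 ((div_le_one ha0).2 ?_)
    exact_mod_cast hs
  · refine Real.rpow_le_rpow_of_exponent_ge hp hp1 ?_
    rw [one_add_div ha0.ne', div_le_div_iff_of_pos_right ha0]
    exact_mod_cast hs

theorem amos_a_promise_zero_round_decider
    (a b : ℕ) (ha : 1 ≤ a) (hb : 1 ≤ b) (p : ℝ) (hp : 0 < p) (hp1 : p ≤ 1)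
    (n : ℕ) (x : Fin n → Bool) :
    ((Finset.univ.filter (fun v : Fin n => x v = true)).card ≤ a →
      p ≤ ∏ v : Fin n, (if x v then p ^ ((1 : ℝ) / (a : ℝ)) else 1)) ∧
    (a + b ≤ (Finset.univ.filter (fun v : Fin n => x v = true)).card →
      ∏ v : Fin n, (if x v then p ^ ((1 : ℝ) / (a : ℝ)) else 1)
        ≤ p ^ (1 + (b : ℝ) / (a : ℝ))) :=
  amos_a_promise_zero_round_decider_general a b ha p hp hp1 n x
end
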